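/- arXiv:2109.12077 — 3 statements merged into one kernel-verified Lean document; each statement's English description precedes it below -/
import Mathlib

section
/- Let f, φ : 𝒳 → ℝ be twice continuously differentiable on an open convex set 𝒳 ⊆ ℝ^d, with ∇²φ(x) positive definite. If ⟨∇f(x') − ∇f(x), ∇φ(x') − ∇φ(x)⟩ ≥ m·‖∇φ(x') − ∇φ(x)‖² for all x, x' ∈ 𝒳, then m·∇²φ(x) ⪯ ∇²f(x) for all x ∈ 𝒳 (in the Loewner order). -/
/-
Dividing the hypothesis at `x' = x + t • v` by `t ^ 2` and letting `t → 0` gives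
`m ‖∇²φ(x) v‖² ≤ ⟪∇²f(x) v, ∇²φ(x) v⟫`, i.e. `⟪S v, A v⟫ ≥ 0` for `A = ∇²φ(x)` and
`S = ∇²f(x) - m ∇²φ(x)`. Hessians are symmetric, so `S` is symmetric, and for an eigenvector `u`
of `S` with eigenvalue `μ` we get `μ ⟪u, A u⟫ ≥ 0`; as `A ≻ 0`, every eigenvalue of `S` is
nonnegative, so `S ⪰ 0`.
-/

open InnerProductSpace Filter Topology Module.End

section

variable {F : Type*} [NormedAddCommGroup F] [InnerProductSpace ℝ F]

theorem mul_norm_sq_le_inner_of_hasDerivAt {f g : ℝ → F} {f' g' : F} {t₀ m : ℝ}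
    (hf : HasDerivAt f f' t₀) (hg : HasDerivAt g g' t₀)
    (h : ∀ᶠ t in 𝓝 t₀, m * ‖g t - g t₀‖ ^ 2 ≤ ⟪f t - f t₀, g t - g t₀⟫_ℝ) :
    m * ‖g'‖ ^ 2 ≤ ⟪f', g'⟫_ℝ := by
  have hslope : ∀ᶠ t in 𝓝[≠] t₀, m * ‖slope g t₀ t‖ ^ 2 ≤ ⟪slope f t₀ t, slope g t₀ t⟫_ℝ := by
    filter_upwards [nhdsWithin_le_nhds h] with t ht
    simp only [slope_def_module, norm_smul, real_inner_smul_left, real_inner_smul_right, mul_pow,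
      Real.norm_eq_abs, sq_abs]
    calc m * ((t - t₀)⁻¹ ^ 2 * ‖g t - g t₀‖ ^ 2)
        = (t - t₀)⁻¹ ^ 2 * (m * ‖g t - g t₀‖ ^ 2) := by ring
      _ ≤ (t - t₀)⁻¹ ^ 2 * ⟪f t - f t₀, g t - g t₀⟫_ℝ := by gcongr
      _ = _ := by ring
  exact le_of_tendsto_of_tendsto (((hg.tendsto_slope).norm.pow 2).const_mul m)
    (hf.tendsto_slope.inner hg.tendsto_slope) hslope

theorem mul_norm_sq_le_inner_of_hasFDerivAt {E : Type*} [NormedAddCommGroup E] [NormedSpace ℝ E]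
    {f g : E → F} {f' g' : E →L[ℝ] F} {x : E} {m : ℝ}
    (hf : HasFDerivAt f f' x) (hg : HasFDerivAt g g' x)
    (h : ∀ᶠ y in 𝓝 x, m * ‖g y - g x‖ ^ 2 ≤ ⟪f y - f x, g y - g x⟫_ℝ) (v : E) :
    m * ‖g' v‖ ^ 2 ≤ ⟪f' v, g' v⟫_ℝ := by
  have hline : HasDerivAt (fun t : ℝ => x + t • v) v 0 := by
    simpa using ((hasDerivAt_id (0 : ℝ)).smul_const v).const_add x
  have hx : x = x + (0 : ℝ) • v := by simp
  refine mul_norm_sq_le_inner_of_hasDerivAt (hf.comp_hasDerivAt_of_eq 0 hline hx)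
    (hg.comp_hasDerivAt_of_eq 0 hline hx) ?_
  have hmaps : Tendsto (fun t : ℝ => x + t • v) (𝓝 0) (𝓝 x) := by
    simpa using hline.continuousAt.tendsto
  simpa using hmaps.eventually h

end

section

variable {E : Type*} [NormedAddCommGroup E] [InnerProductSpace ℝ E]

theorem LinearMap.IsSymmetric.isPositive_of_forall_hasEigenvalue_nonneg [FiniteDimensional ℝ E]
    {T : E →ₗ[ℝ] E} (hT : T.IsSymmetric) (h : ∀ μ : ℝ, HasEigenvalue T μ → 0 ≤ μ) :
    T.IsPositive := by
  refine T.isPositive_iff.2 ⟨hT, fun v => ?_⟩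
  set b := hT.eigenvectorBasis rfl
  calc (0 : ℝ) ≤ ∑ i, hT.eigenvalues rfl i * ⟪b i, v⟫_ℝ ^ 2 :=
        Finset.sum_nonneg fun i _ =>
          mul_nonneg (h _ (hT.hasEigenvalue_eigenvalues rfl i)) (sq_nonneg _)
    _ = ⟪T v, v⟫_ℝ := by
      rw [← b.sum_inner_mul_inner (T v) v]
      refine Finset.sum_congr rfl fun i _ => ?_
      rw [hT, hT.apply_eigenvectorBasis, real_inner_smul_right, real_inner_comm v]
      simp only [Real.ringHom_apply]
      ring

theorem LinearMap.IsSymmetric.isPositive_of_inner_apply_posDef_nonneg [FiniteDimensional ℝ E]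
    {S A : E →ₗ[ℝ] E} (hS : S.IsSymmetric) (hA : ∀ v, v ≠ 0 → 0 < ⟪A v, v⟫_ℝ)
    (h : ∀ v, 0 ≤ ⟪S v, A v⟫_ℝ) : S.IsPositive :=
  hS.isPositive_of_forall_hasEigenvalue_nonneg fun μ hμ => by
    obtain ⟨u, hu⟩ := hμ.exists_hasEigenvector
    have hSu := h u
    rw [hu.apply_eq_smul, real_inner_smul_left, real_inner_comm] at hSu
    exact nonneg_of_mul_nonneg_left hSu (hA u hu.2)

theorem isSymmetric_of_hasFDerivAt_gradient [CompleteSpace E] {f : E → ℝ} {Df : E → E}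
    {H : E →L[ℝ] E} {x : E} (hDf : ∀ᶠ y in 𝓝 x, HasGradientAt f (Df y) y)
    (hH : HasFDerivAt Df H x) : (H : E →ₗ[ℝ] E).IsSymmetric := by
  let L : E →L[ℝ] StrongDual ℝ E := (toDual ℝ E).toContinuousLinearEquiv.toContinuousLinearMap
  have hL : HasFDerivAt (fun y => L (Df y)) (L.comp H) x := L.hasFDerivAt.comp x hH
  intro v w
  have := second_derivative_symmetric_of_eventually
    (hDf.mono fun y hy => hy.hasFDerivAt) hL v w
  simpa [L, toDual_apply_apply, real_inner_comm v] using this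

theorem smul_hessian_le_hessian [FiniteDimensional ℝ E] {f φ : E → ℝ} {Df Dφ : E → E}
    {Hf Hφ : E →L[ℝ] E} {x : E} {m : ℝ}
    (hDf : ∀ᶠ y in 𝓝 x, HasGradientAt f (Df y) y) (hDφ : ∀ᶠ y in 𝓝 x, HasGradientAt φ (Dφ y) y)
    (hHf : HasFDerivAt Df Hf x) (hHφ : HasFDerivAt Dφ Hφ x)
    (hpos : ∀ v, v ≠ 0 → 0 < ⟪Hφ v, v⟫_ℝ)
    (hsc : ∀ᶠ y in 𝓝 x, m * ‖Dφ y - Dφ x‖ ^ 2 ≤ ⟪Df y - Df x, Dφ y - Dφ x⟫_ℝ) :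
    m • (Hφ : E →ₗ[ℝ] E) ≤ Hf := by
  have hsymm : ((Hf : E →ₗ[ℝ] E) - m • (Hφ : E →ₗ[ℝ] E)).IsSymmetric :=
    (isSymmetric_of_hasFDerivAt_gradient hDf hHf).sub
      ((isSymmetric_of_hasFDerivAt_gradient hDφ hHφ).smul (by simp))
  refine hsymm.isPositive_of_inner_apply_posDef_nonneg hpos fun v => ?_
  have hv := mul_norm_sq_le_inner_of_hasFDerivAt hHf hHφ hsc v
  simp only [LinearMap.sub_apply, LinearMap.smul_apply, ContinuousLinearMap.coe_coe,
    inner_sub_left, real_inner_smul_left, real_inner_self_eq_norm_sq]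
  linarith

end

theorem stmt_4_general {d : ℕ} (𝒳 : Set (EuclideanSpace ℝ (Fin d)))
    (hopen : IsOpen 𝒳)
    (f φ : EuclideanSpace ℝ (Fin d) → ℝ)
    (Df Dφ : EuclideanSpace ℝ (Fin d) → EuclideanSpace ℝ (Fin d))
    (hDf : ∀ x ∈ 𝒳, HasGradientAt f (Df x) x)
    (hDφ : ∀ x ∈ 𝒳, HasGradientAt φ (Dφ x) x)
    (Hf Hφ : EuclideanSpace ℝ (Fin d) →
      EuclideanSpace ℝ (Fin d) →L[ℝ] EuclideanSpace ℝ (Fin d))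
    (hHf : ∀ x ∈ 𝒳, HasFDerivAt Df (Hf x) x)
    (hHφ : ∀ x ∈ 𝒳, HasFDerivAt Dφ (Hφ x) x)
    (hpos : ∀ x ∈ 𝒳, ∀ v : EuclideanSpace ℝ (Fin d), v ≠ 0 → (0 : ℝ) < inner ℝ (Hφ x v) v)
    (m : ℝ)
    (hsc : ∀ x ∈ 𝒳, ∀ x' ∈ 𝒳,
      m * ‖Dφ x' - Dφ x‖ ^ 2 ≤ inner ℝ (Df x' - Df x) (Dφ x' - Dφ x)) :
    ∀ x ∈ 𝒳, ∀ v : EuclideanSpace ℝ (Fin d),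
      m * (inner ℝ (Hφ x v) v : ℝ) ≤ inner ℝ (Hf x v) v := by
  intro x hx v
  have hnhds : ∀ᶠ y in 𝓝 x, y ∈ 𝒳 := hopen.mem_nhds hx
  have hle := smul_hessian_le_hessian (hnhds.mono hDf) (hnhds.mono hDφ) (hHf x hx) (hHφ x hx)
    (hpos x hx) (hnhds.mono (hsc x hx))
  have hv := hle.inner_nonneg_left v
  simp only [LinearMap.sub_apply, LinearMap.smul_apply, ContinuousLinearMap.coe_coe,
    inner_sub_left, real_inner_smul_left] at hv
  linarith

/-- Relative strong convexity via gradients implies `m ∇²φ(x) ⪯ ∇²f(x)` in the Loewner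
order: if `⟨∇f(x') - ∇f(x), ∇φ(x') - ∇φ(x)⟩ ≥ m ‖∇φ(x') - ∇φ(x)‖²` on an open convex
set where `∇²φ ≻ 0`, then `m ⟨∇²φ(x) v, v⟩ ≤ ⟨∇²f(x) v, v⟩` for all `x ∈ 𝒳`, `v`. -/
theorem stmt_4 {d : ℕ} (𝒳 : Set (EuclideanSpace ℝ (Fin d)))
    (hopen : IsOpen 𝒳) (hconv : Convex ℝ 𝒳)
    (f φ : EuclideanSpace ℝ (Fin d) → ℝ)
    (hf : ContDiffOn ℝ 2 f 𝒳) (hφ : ContDiffOn ℝ 2 φ 𝒳)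
    (Df Dφ : EuclideanSpace ℝ (Fin d) → EuclideanSpace ℝ (Fin d))
    (hDf : ∀ x ∈ 𝒳, HasGradientAt f (Df x) x)
    (hDφ : ∀ x ∈ 𝒳, HasGradientAt φ (Dφ x) x)
    (Hf Hφ : EuclideanSpace ℝ (Fin d) →
      EuclideanSpace ℝ (Fin d) →L[ℝ] EuclideanSpace ℝ (Fin d))
    (hHf : ∀ x ∈ 𝒳, HasFDerivAt Df (Hf x) x)
    (hHφ : ∀ x ∈ 𝒳, HasFDerivAt Dφ (Hφ x) x)
    (hpos : ∀ x ∈ 𝒳, ∀ v : EuclideanSpace ℝ (Fin d), v ≠ 0 → (0 : ℝ) < inner ℝ (Hφ x v) v)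
    (m : ℝ) (hm : 0 < m)
    (hsc : ∀ x ∈ 𝒳, ∀ x' ∈ 𝒳,
      m * ‖Dφ x' - Dφ x‖ ^ 2 ≤ inner ℝ (Df x' - Df x) (Dφ x' - Dφ x)) :
    ∀ x ∈ 𝒳, ∀ v : EuclideanSpace ℝ (Fin d),
      m * (inner ℝ (Hφ x v) v : ℝ) ≤ inner ℝ (Hf x v) v :=
  stmt_4_general 𝒳 hopen f φ Df Dφ hDf hDφ Hf Hφ hHf hHφ hpos m hsc
end

section
/- Let f, φ : 𝒳 → ℝ be twice continuously differentiable on an open convex set 𝒳 ⊆ ℝ^d, with ∇²φ(x) positive definite. If ‖∇f(x') − ∇f(x)‖ ≤ M·‖∇φ(x') − ∇φ(x)‖ for all x, x' ∈ 𝒳, then ∇²f(x) ⪯ M·∇²φ(x) for all x ∈ 𝒳. -/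
/-!
Differentiating the relative smoothness inequality along lines through `x` gives
`‖∇²f(x) u‖ ≤ M ‖∇²φ(x) u‖` for every `u`. The Hessians are symmetric, and `∇²φ(x)` is positive
definite, so the generalized Rayleigh quotient `⟨∇²f(x) w, w⟩ / ⟨∇²φ(x) w, w⟩` attains its maximum
`m` on the unit sphere at some `v₀`. Then `m ∇²φ(x) - ∇²f(x)` is positive semidefinite and vanishes
on `v₀`, so `∇²f(x) v₀ = m ∇²φ(x) v₀` and the norm bound at `v₀` gives `m ≤ M`.
-/

open InnerProductSpace Filter Topology

section DerivativeComparison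

variable {E F G : Type*} [NormedAddCommGroup E] [NormedSpace ℝ E]
  [NormedAddCommGroup F] [NormedSpace ℝ F] [NormedAddCommGroup G] [NormedSpace ℝ G]

theorem HasDerivAt.norm_le_mul_of_eventually_norm_sub_le {γ : ℝ → F} {η : ℝ → G} {a : F} {b : G}
    {t₀ M : ℝ} (hγ : HasDerivAt γ a t₀) (hη : HasDerivAt η b t₀)
    (hle : ∀ᶠ t in 𝓝 t₀, ‖γ t - γ t₀‖ ≤ M * ‖η t - η t₀‖) :
    ‖a‖ ≤ M * ‖b‖ := by
  refine le_of_tendsto_of_tendsto (hasDerivAt_iff_tendsto_slope.mp hγ).norm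
    ((hasDerivAt_iff_tendsto_slope.mp hη).norm.const_mul M) ?_
  filter_upwards [nhdsWithin_le_nhds hle] with t ht
  rw [slope_def_module, slope_def_module, norm_smul, norm_smul, mul_left_comm]
  gcongr

theorem HasFDerivAt.norm_apply_le_mul_of_eventually_norm_sub_le {g : E → F} {h : E → G}
    {g' : E →L[ℝ] F} {h' : E →L[ℝ] G} {x : E} {M : ℝ}
    (hg : HasFDerivAt g g' x) (hh : HasFDerivAt h h' x)
    (hle : ∀ᶠ y in 𝓝 x, ‖g y - g x‖ ≤ M * ‖h y - h x‖) (u : E) :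
    ‖g' u‖ ≤ M * ‖h' u‖ := by
  have hline : HasDerivAt (fun t : ℝ => x + t • u) u 0 := by
    simpa using ((hasDerivAt_id (0 : ℝ)).smul_const u).const_add x
  have hline0 : x + (0 : ℝ) • u = x := by simp
  rw [← hline0] at hg hh hle
  refine (hg.comp_hasDerivAt 0 hline).norm_le_mul_of_eventually_norm_sub_le
    (hh.comp_hasDerivAt 0 hline) ?_
  exact hline.continuousAt.eventually hle

end DerivativeComparison

section Hessian

variable {E : Type*} [NormedAddCommGroup E] [InnerProductSpace ℝ E] [CompleteSpace E]

theorem isSymmetric_of_hasFDerivAt_of_eventually_hasGradientAt {g : E → ℝ} {D : E → E}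
    {H : E →L[ℝ] E} {x : E} (hD : ∀ᶠ y in 𝓝 x, HasGradientAt g (D y) y)
    (hH : HasFDerivAt D H x) : (H : E →ₗ[ℝ] E).IsSymmetric := by
  have hg : ∀ᶠ y in 𝓝 x, HasFDerivAt g (innerSL ℝ (D y)) y := by
    filter_upwards [hD] with y hy using hy.hasFDerivAt
  intro u w
  have := second_derivative_symmetric_of_eventually hg ((innerSL ℝ).hasFDerivAt.comp x hH) u w
  rw [← real_inner_comm u]
  exact this

end Hessian

section GeneralizedRayleigh

variable {E : Type*} [NormedAddCommGroup E] [InnerProductSpace ℝ E]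

theorem LinearMap.IsPositive.apply_eq_zero_of_inner_self_eq_zero {T : E →ₗ[ℝ] E}
    (hT : T.IsPositive) {v : E} (hv : ⟪T v, v⟫_ℝ = 0) : T v = 0 := by
  have hquad : ∀ t : ℝ, 0 ≤ ⟪T (T v), T v⟫_ℝ * (t * t) + (-2 * ‖T v‖ ^ 2) * t + 0 := by
    intro t
    have h := hT.inner_nonneg_left (v - t • T v)
    rw [map_sub, map_smul, inner_sub_left, inner_sub_right, inner_sub_right,
      real_inner_smul_left, real_inner_smul_left, real_inner_smul_right, real_inner_smul_right,
      hT.isSymmetric (T v) v, hv, real_inner_self_eq_norm_sq] at h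
    linarith
  have h := discrim_le_zero hquad
  rw [discrim] at h
  have h4 : ‖T v‖ ^ 4 = 0 := le_antisymm (by nlinarith) (by positivity)
  simpa using h4

variable [FiniteDimensional ℝ E]

theorem exists_forall_inner_le_mul_inner_of_pos (A B : E →L[ℝ] E)
    (hB : ∀ v, v ≠ 0 → 0 < ⟪B v, v⟫_ℝ) [Nontrivial E] :
    ∃ v₀ ≠ 0, ∃ m : ℝ, ⟪A v₀, v₀⟫_ℝ = m * ⟪B v₀, v₀⟫_ℝ ∧
      ∀ w, ⟪A w, w⟫_ℝ ≤ m * ⟪B w, w⟫_ℝ := by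
  let r : E → ℝ := fun w => ⟪A w, w⟫_ℝ / ⟪B w, w⟫_ℝ
  have hr_smul : ∀ (c : ℝ) w, c ≠ 0 → r (c • w) = r w := by
    intro c w hc
    simp only [r, map_smul, real_inner_smul_left, real_inner_smul_right, ← mul_assoc]
    exact mul_div_mul_left _ _ (mul_ne_zero hc hc)
  have hcont : ContinuousOn r (Metric.sphere (0 : E) 1) := by
    refine (A.continuous.inner continuous_id).continuousOn.div
      (B.continuous.inner continuous_id).continuousOn fun w hw => (hB w ?_).ne'
    exact ne_zero_of_mem_unit_sphere ⟨w, hw⟩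
  obtain ⟨v₀, hv₀, hmax⟩ := (isCompact_sphere (0 : E) 1).exists_isMaxOn
    (NormedSpace.sphere_nonempty.mpr zero_le_one) hcont
  have hv₀0 : v₀ ≠ 0 := ne_zero_of_mem_unit_sphere ⟨v₀, hv₀⟩
  refine ⟨v₀, hv₀0, r v₀, (div_mul_cancel₀ _ (hB v₀ hv₀0).ne').symm, fun w => ?_⟩
  rcases eq_or_ne w 0 with rfl | hw
  · simp
  have hw' : ‖w‖⁻¹ ≠ 0 := inv_ne_zero (norm_ne_zero_iff.mpr hw)
  have hrw : r w ≤ r v₀ := by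
    rw [← hr_smul _ w hw']
    exact hmax (by simp [norm_smul, hw])
  rwa [div_le_iff₀ (hB w hw)] at hrw

theorem exists_apply_eq_smul_apply_forall_inner_le (A B : E →L[ℝ] E)
    (hA : (A : E →ₗ[ℝ] E).IsSymmetric) (hB : (B : E →ₗ[ℝ] E).IsSymmetric)
    (hBpos : ∀ v, v ≠ 0 → 0 < ⟪B v, v⟫_ℝ) [Nontrivial E] :
    ∃ v₀ ≠ 0, ∃ m : ℝ, A v₀ = m • B v₀ ∧ ∀ w, ⟪A w, w⟫_ℝ ≤ m * ⟪B w, w⟫_ℝ := by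
  obtain ⟨v₀, hv₀, m, heq, hle⟩ := exists_forall_inner_le_mul_inner_of_pos A B hBpos
  have hT : (m • (B : E →ₗ[ℝ] E) - A).IsPositive := by
    refine ⟨(hB.smul rfl).sub hA, fun w => ?_⟩
    simp only [LinearMap.sub_apply, LinearMap.smul_apply, ContinuousLinearMap.coe_coe,
      inner_sub_left, real_inner_smul_left, RCLike.re_to_real, sub_nonneg]
    exact hle w
  have hTv₀ := hT.apply_eq_zero_of_inner_self_eq_zero (v := v₀) (by
    simp only [LinearMap.sub_apply, LinearMap.smul_apply, ContinuousLinearMap.coe_coe,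
      inner_sub_left, real_inner_smul_left, heq, sub_self])
  exact ⟨v₀, hv₀, m, (sub_eq_zero.mp hTv₀).symm, hle⟩

theorem inner_apply_self_le_mul_of_norm_apply_le (A B : E →L[ℝ] E)
    (hA : (A : E →ₗ[ℝ] E).IsSymmetric) (hB : (B : E →ₗ[ℝ] E).IsSymmetric)
    (hBpos : ∀ v, v ≠ 0 → 0 < ⟪B v, v⟫_ℝ) {M : ℝ} (hAB : ∀ v, ‖A v‖ ≤ M * ‖B v‖) (v : E) :
    ⟪A v, v⟫_ℝ ≤ M * ⟪B v, v⟫_ℝ := by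
  rcases eq_or_ne v 0 with rfl | hv
  · simp
  have : Nontrivial E := nontrivial_of_ne v 0 hv
  obtain ⟨v₀, hv₀, m, heig, hle⟩ := exists_apply_eq_smul_apply_forall_inner_le A B hA hB hBpos
  have hBv₀ : 0 < ‖B v₀‖ := norm_pos_iff.mpr fun h => by simpa [h] using hBpos v₀ hv₀
  have hmM : m ≤ M := by
    have h₀ := hAB v₀
    rw [heig, norm_smul, Real.norm_eq_abs] at h₀
    exact (le_abs_self m).trans (le_of_mul_le_mul_right h₀ hBv₀)
  calc ⟪A v, v⟫_ℝ ≤ m * ⟪B v, v⟫_ℝ := hle v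
    _ ≤ M * ⟪B v, v⟫_ℝ := mul_le_mul_of_nonneg_right hmM (hBpos v hv).le

end GeneralizedRayleigh

theorem stmt_5_general {d : ℕ} (𝒳 : Set (EuclideanSpace ℝ (Fin d)))
    (hopen : IsOpen 𝒳)
    (f φ : EuclideanSpace ℝ (Fin d) → ℝ)
    (Df Dφ : EuclideanSpace ℝ (Fin d) → EuclideanSpace ℝ (Fin d))
    (hDf : ∀ x ∈ 𝒳, HasGradientAt f (Df x) x)
    (hDφ : ∀ x ∈ 𝒳, HasGradientAt φ (Dφ x) x)
    (Hf Hφ : EuclideanSpace ℝ (Fin d) →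
      EuclideanSpace ℝ (Fin d) →L[ℝ] EuclideanSpace ℝ (Fin d))
    (hHf : ∀ x ∈ 𝒳, HasFDerivAt Df (Hf x) x)
    (hHφ : ∀ x ∈ 𝒳, HasFDerivAt Dφ (Hφ x) x)
    (hpos : ∀ x ∈ 𝒳, ∀ v : EuclideanSpace ℝ (Fin d), v ≠ 0 → (0 : ℝ) < inner ℝ (Hφ x v) v)
    (M : ℝ)
    (hsm : ∀ x ∈ 𝒳, ∀ x' ∈ 𝒳,
      ‖Df x' - Df x‖ ≤ M * ‖Dφ x' - Dφ x‖) :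
    ∀ x ∈ 𝒳, ∀ v : EuclideanSpace ℝ (Fin d),
      (inner ℝ (Hf x v) v : ℝ) ≤ M * inner ℝ (Hφ x v) v := by
  intro x hx v
  have hx𝒳 : ∀ᶠ y in 𝓝 x, y ∈ 𝒳 := hopen.mem_nhds hx
  have hnorm : ∀ u, ‖Hf x u‖ ≤ M * ‖Hφ x u‖ :=
    (hHf x hx).norm_apply_le_mul_of_eventually_norm_sub_le (hHφ x hx) (hx𝒳.mono (hsm x hx))
  exact inner_apply_self_le_mul_of_norm_apply_le (Hf x) (Hφ x)
    (isSymmetric_of_hasFDerivAt_of_eventually_hasGradientAt (hx𝒳.mono hDf) (hHf x hx))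
    (isSymmetric_of_hasFDerivAt_of_eventually_hasGradientAt (hx𝒳.mono hDφ) (hHφ x hx))
    (hpos x hx) hnorm v

/-- Relative smoothness via gradients implies `∇²f(x) ⪯ M ∇²φ(x)` in the Loewner
order: if `‖∇f(x') - ∇f(x)‖ ≤ M ‖∇φ(x') - ∇φ(x)‖` on an open convex set where
`∇²φ ≻ 0`, then `⟨∇²f(x) v, v⟩ ≤ M ⟨∇²φ(x) v, v⟩` for all `x ∈ 𝒳`, `v`. -/
theorem stmt_5 {d : ℕ} (𝒳 : Set (EuclideanSpace ℝ (Fin d)))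
    (hopen : IsOpen 𝒳) (hconv : Convex ℝ 𝒳)
    (f φ : EuclideanSpace ℝ (Fin d) → ℝ)
    (hf : ContDiffOn ℝ 2 f 𝒳) (hφ : ContDiffOn ℝ 2 φ 𝒳)
    (Df Dφ : EuclideanSpace ℝ (Fin d) → EuclideanSpace ℝ (Fin d))
    (hDf : ∀ x ∈ 𝒳, HasGradientAt f (Df x) x)
    (hDφ : ∀ x ∈ 𝒳, HasGradientAt φ (Dφ x) x)
    (Hf Hφ : EuclideanSpace ℝ (Fin d) →
      EuclideanSpace ℝ (Fin d) →L[ℝ] EuclideanSpace ℝ (Fin d))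
    (hHf : ∀ x ∈ 𝒳, HasFDerivAt Df (Hf x) x)
    (hHφ : ∀ x ∈ 𝒳, HasFDerivAt Dφ (Hφ x) x)
    (hpos : ∀ x ∈ 𝒳, ∀ v : EuclideanSpace ℝ (Fin d), v ≠ 0 → (0 : ℝ) < inner ℝ (Hφ x v) v)
    (M : ℝ) (hM : 0 < M)
    (hsm : ∀ x ∈ 𝒳, ∀ x' ∈ 𝒳,
      ‖Df x' - Df x‖ ≤ M * ‖Dφ x' - Dφ x‖) :
    ∀ x ∈ 𝒳, ∀ v : EuclideanSpace ℝ (Fin d),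
      (inner ℝ (Hf x v) v : ℝ) ≤ M * inner ℝ (Hφ x v) v :=
  stmt_5_general 𝒳 hopen f φ Df Dφ hDf hDφ Hf Hφ hHf hHφ hpos M hsm
end

section
/- In two dimensions, with a₁ = (1,0), a₂ = (√(1−ε²), ε), b = 0, s = √(1−ε²), x = (1,0) and x' = (2, −2s(s+1)/(ε(s+2))), the vector v(x,x') = S_x⁻¹S_{x'}⁻¹Aᵀ(x'−x) is proportional to (1,−1), which is the eigenvector of AᵀA with eigenvalue 1 − √(1−ε²); hence ‖v(x,x')‖²/(v(x,x')ᵀAᵀA v(x,x')) = 1/(1 − √(1−ε²)). -/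
open Matrix

/-- Two-dimensional example: with `a₁ = (1,0)`, `a₂ = (√(1-ε²), ε)`, `b = 0`,
`s = √(1-ε²)`, `x = (1,0)` and `x' = (2, -2s(s+1)/(ε(s+2)))`, the vector
`v(x,x') = S_x⁻¹S_{x'}⁻¹Aᵀ(x'-x)` is proportional to `(1,-1)`, which is an
eigenvector of `AᵀA` with eigenvalue `1 - √(1-ε²)`; hence
`‖v(x,x')‖²/(v(x,x')ᵀAᵀAv(x,x')) = 1/(1 - √(1-ε²))`. -/
theorem stmt_13 (ε : ℝ) (hε : 0 < ε) (hε1 : ε < 1)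
    (s : ℝ) (hs : s = Real.sqrt (1 - ε ^ 2))
    (A : Matrix (Fin 2) (Fin 2) ℝ) (hA : A = !![1, s; 0, ε])
    (x x' : Fin 2 → ℝ) (hx : x = ![1, 0])
    (hx' : x' = ![2, -2 * s * (s + 1) / (ε * (s + 2))])
    (Sx Sx' : Matrix (Fin 2) (Fin 2) ℝ)
    (hSx : Sx = Matrix.diagonal (Aᵀ.mulVec x))
    (hSx' : Sx' = Matrix.diagonal (Aᵀ.mulVec x'))
    (v : Fin 2 → ℝ) (hv : v = (Sx⁻¹ * Sx'⁻¹ * Aᵀ).mulVec (x' - x)) :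
    (∃ c : ℝ, v = c • ![1, -1]) ∧
    (Aᵀ * A).mulVec ![(1 : ℝ), -1] = (1 - Real.sqrt (1 - ε ^ 2)) • ![1, -1] ∧
    (v ⬝ᵥ v) / (v ⬝ᵥ (Aᵀ * A).mulVec v) = 1 / (1 - Real.sqrt (1 - ε ^ 2)) := by
  have h1 : (0:ℝ) < 1 - ε ^ 2 := by nlinarith
  have hs0 : 0 < s := hs ▸ Real.sqrt_pos.mpr h1
  have hs2 : s ^ 2 = 1 - ε ^ 2 := by rw [hs]; exact Real.sq_sqrt h1.le
  have hs1 : s < 1 := by nlinarith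
  have hsne : s ≠ 0 := hs0.ne'
  have hεne : ε ≠ 0 := hε.ne'
  have hs2ne : s + 2 ≠ 0 := by positivity
  have h1s : (1:ℝ) - s ≠ 0 := by linarith
  rw [← hs]
  subst hv hSx hSx' hA hx hx'
  have hAT : (!![(1:ℝ), s; 0, ε])ᵀ = !![1, 0; s, ε] := by
    ext i j; fin_cases i <;> fin_cases j <;> simp
  rw [hAT]
  have hSxe : Matrix.diagonal (!![(1:ℝ), 0; s, ε].mulVec ![1, 0]) = !![1, 0; 0, s] := by
    ext i j
    fin_cases i <;> fin_cases j <;>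
      simp [Matrix.mulVec, Matrix.diagonal, dotProduct, Fin.sum_univ_two]
  have hSx'e : Matrix.diagonal (!![(1:ℝ), 0; s, ε].mulVec ![2, -2 * s * (s + 1) / (ε * (s + 2))]) = !![2, 0; 0, 2 * s / (s + 2)] := by
    ext i j
    fin_cases i <;> fin_cases j <;>
      simp [Matrix.mulVec, Matrix.diagonal, dotProduct, Fin.sum_univ_two] <;>
      field_simp <;> ring
  have hinv1 : (!![(1:ℝ), 0; 0, s])⁻¹ = !![1, 0; 0, s⁻¹] := by
    apply Matrix.inv_eq_right_inv
    ext i j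
    fin_cases i <;> fin_cases j <;>
      simp [Matrix.mul_apply, Fin.sum_univ_two] <;> field_simp
  have hinv2 : (!![(2:ℝ), 0; 0, 2 * s / (s + 2)])⁻¹ = !![1/2, 0; 0, (s + 2) / (2 * s)] := by
    apply Matrix.inv_eq_right_inv
    ext i j
    fin_cases i <;> fin_cases j <;>
      simp [Matrix.mul_apply, Fin.sum_univ_two] <;> field_simp
  rw [hSxe, hSx'e, hinv1, hinv2]
  have hv2 : ((!![(1:ℝ), 0; 0, s⁻¹] * !![1/2, 0; 0, (s + 2) / (2 * s)] * !![(1:ℝ), 0; s, ε]).mulVec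
      (![2, -2 * s * (s + 1) / (ε * (s + 2))] - ![1, 0])) = ![1/2, -1/2] := by
    ext i
    fin_cases i <;>
      simp [Matrix.mulVec, Matrix.mul_apply, dotProduct, Fin.sum_univ_two] <;>
      (try field_simp) <;> (try ring)
  rw [hv2]
  refine ⟨⟨1/2, by ext i; fin_cases i <;> norm_num⟩, ?_, ?_⟩
  · ext i
    fin_cases i <;>
      simp [Matrix.mulVec, Matrix.mul_apply, dotProduct, Fin.sum_univ_two] <;>
      nlinarith [hs2]
  · have hnum : (![(1:ℝ)/2, -1/2] ⬝ᵥ ![(1:ℝ)/2, -1/2]) = 1/2 := by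
      norm_num [dotProduct, Fin.sum_univ_two]
    have hden : (![(1:ℝ)/2, -1/2] ⬝ᵥ (!![(1:ℝ), 0; s, ε] * !![1, s; 0, ε]).mulVec ![1/2, -1/2]) = (1 - s) / 2 := by
      simp [dotProduct, Matrix.mulVec, Matrix.mul_apply, Fin.sum_univ_two]
      nlinarith [hs2]
    rw [hnum, hden]
    field_simp
end
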